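/- arXiv:2301.08086 — 2 statements merged into one kernel-verified Lean document; each statement's English description precedes it below -/
import Mathlib

section
/- Efficiency of Shapley values: for every value function v : Finset 𝒮 → ℝ, ∑_{i=1}^{N} Φ_i(v) = v(𝒮) − v(∅). -/
open Finset MeasureTheory

/-- Shapley weight `w(S) = |S|! (N - |S| - 1)! / N!`. -/
noncomputable def w (N : Nat) (S : Finset (Fin N)) : Real :=
  (Nat.factorial S.card * Nat.factorial (N - S.card - 1) : Real) / (Nat.factorial N : Real)

/-- Shapley value of player `i` for the value function `v`. -/
noncomputable def Phi (N : Nat) (v : Finset (Fin N) -> Real) (i : Fin N) : Real :=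
  Finset.sum (Finset.univ.erase i).powerset (fun S => w N S * (v (insert i S) - v S))

noncomputable def eN (N k : Nat) : Real :=
  (Nat.factorial k * Nat.factorial (N - k) : Real) / (Nat.factorial N : Real)

theorem shapley_efficiency (N : Nat) (hN : 1 <= N) (v : Finset (Fin N) -> Real) :
    Finset.sum Finset.univ (fun i => Phi N v i) = v Finset.univ - v (∅ : Finset (Fin N)) := by
  classical
  have hfacN : ((Nat.factorial N : ℝ)) ≠ 0 := by
    exact_mod_cast Nat.factorial_ne_zero N
  have hswap :
      Finset.sum Finset.univ (fun i => Phi N v i)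
        = ∑ S ∈ Finset.univ.powerset, ∑ i ∈ (Finset.univ \ S),
            w N S * (v (insert i S) - v S) := by
    have h1 : ∀ i : Fin N, Phi N v i
        = ∑ S ∈ Finset.univ.powerset,
            if i ∈ Finset.univ \ S then w N S * (v (insert i S) - v S) else 0 := by
      intro i
      unfold Phi
      rw [show (Finset.univ.erase i).powerset
          = Finset.univ.powerset.filter (fun S => i ∈ Finset.univ \ S) by
        ext S; simp [Finset.subset_erase]]
      rw [Finset.sum_filter]
    simp only [h1]
    rw [Finset.sum_comm]
    apply Finset.sum_congr rfl
    intro S _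
    rw [Finset.sum_ite_mem]
    simp
  rw [hswap]
  have hsplit :
      (∑ S ∈ Finset.univ.powerset, ∑ i ∈ (Finset.univ \ S),
          w N S * (v (insert i S) - v S))
        = (∑ S ∈ Finset.univ.powerset, ∑ i ∈ (Finset.univ \ S), w N S * v (insert i S))
          - (∑ S ∈ Finset.univ.powerset, ∑ i ∈ (Finset.univ \ S), w N S * v S) := by
    simp only [mul_sub, Finset.sum_sub_distrib]
  rw [hsplit]
  -- A part: reindex
  have hA : (∑ S ∈ Finset.univ.powerset, ∑ i ∈ (Finset.univ \ S), w N S * v (insert i S))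
      = ∑ T ∈ Finset.univ.powerset, ∑ i ∈ T, w N (T.erase i) * v T := by
    rw [Finset.sum_sigma', Finset.sum_sigma']
    apply Finset.sum_nbij' (i := fun p => (⟨insert p.2 p.1, p.2⟩ : Σ _ : Finset (Fin N), Fin N))
      (j := fun p => (⟨p.1.erase p.2, p.2⟩ : Σ _ : Finset (Fin N), Fin N))
    · rintro ⟨S, i⟩ h
      simp only [Finset.mem_sigma, Finset.mem_powerset, Finset.mem_sdiff] at h ⊢
      exact ⟨Finset.subset_univ _, Finset.mem_insert_self _ _⟩
    · rintro ⟨T, i⟩ h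
      simp only [Finset.mem_sigma, Finset.mem_powerset, Finset.mem_sdiff] at h ⊢
      exact ⟨Finset.subset_univ _, Finset.mem_univ _, Finset.notMem_erase _ _⟩
    · rintro ⟨S, i⟩ h
      simp only [Finset.mem_sigma, Finset.mem_powerset, Finset.mem_sdiff] at h
      simp [Finset.erase_insert h.2.2]
    · rintro ⟨T, i⟩ h
      simp only [Finset.mem_sigma, Finset.mem_powerset] at h
      simp [Finset.insert_erase h.2]
    · rintro ⟨S, i⟩ h
      simp only [Finset.mem_sigma, Finset.mem_powerset, Finset.mem_sdiff] at h
      simp [Finset.erase_insert h.2.2]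
  rw [hA]
  -- inner A sum
  have hAin : ∀ T ∈ Finset.univ.powerset,
      (∑ i ∈ T, w N (T.erase i) * v T)
        = eN N T.card * v T - (if T = (∅ : Finset (Fin N)) then eN N 0 * v ∅ else 0) := by
    intro T _
    by_cases hT : T = ∅
    · subst hT; simp
    · have hc : 1 ≤ T.card := Finset.card_pos.mpr (Finset.nonempty_iff_ne_empty.mpr hT)
      have hcw : ∀ i ∈ T, w N (T.erase i) * v T
          = ((Nat.factorial (T.card - 1) * Nat.factorial (N - T.card) : ℝ)
              / (Nat.factorial N : ℝ)) * v T := by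
        intro i hi
        unfold w
        rw [Finset.card_erase_of_mem hi]
        have : N - (T.card - 1) - 1 = N - T.card := by omega
        rw [this]
      rw [Finset.sum_congr rfl hcw, Finset.sum_const, nsmul_eq_mul]
      simp only [hT, if_neg, eN]
      have hfac : (T.card : ℝ) * (Nat.factorial (T.card - 1) : ℝ)
          = (Nat.factorial T.card : ℝ) := by
        exact_mod_cast congrArg (Nat.cast (R := ℝ)) (Nat.mul_factorial_pred (n := T.card) (by omega))
      push_cast
      field_simp
      rw [← hfac]
      ring
  have hBin : ∀ S ∈ Finset.univ.powerset,
      (∑ i ∈ (Finset.univ \ S), w N S * v S)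
        = eN N S.card * v S - (if S = (Finset.univ : Finset (Fin N)) then eN N N * v Finset.univ else 0) := by
    intro S _
    rw [Finset.sum_const, nsmul_eq_mul]
    have hcard : (Finset.univ \ S).card = N - S.card := by
      rw [Finset.card_sdiff_of_subset (Finset.subset_univ S)]
      simp
    rw [hcard]
    have hle : S.card ≤ N := by
      simpa using Finset.card_le_card (Finset.subset_univ S)
    by_cases hS : S = Finset.univ
    · subst hS
      simp [eN, Finset.card_univ, hfacN]
    · have hlt : S.card < N := by
        rcases lt_or_eq_of_le hle with h | h
        · exact h
        · exact absurd (Finset.eq_univ_of_card S (by simp [h])) hS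
      simp only [hS, if_neg, eN, w]
      have hfac : ((N - S.card : ℕ) : ℝ) * (Nat.factorial (N - S.card - 1) : ℝ)
          = (Nat.factorial (N - S.card) : ℝ) := by
        exact_mod_cast congrArg (Nat.cast (R := ℝ))
          (Nat.mul_factorial_pred (n := N - S.card) (by omega))
      push_cast
      field_simp
      rw [← hfac, Nat.cast_sub hle]
      ring
  rw [Finset.sum_congr rfl hAin, Finset.sum_congr rfl hBin]
  simp only [Finset.sum_sub_distrib, Finset.sum_ite_eq', Finset.mem_powerset,
    Finset.empty_subset, Finset.Subset.refl, if_pos, Finset.subset_univ]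
  have h0 : eN N 0 = 1 := by simp [eN, hfacN]
  have hn : eN N N = 1 := by simp [eN, hfacN]
  rw [h0, hn]
  ring
end

section
/- Theorem 1: the uncertain Shapley value equals a regular Shapley value with a shifted deterministic value function. Precisely, Φ̃_i(v,ν) = Φ_i(v') for all players i ∈ 𝒮, where v'(S) := v(S) + ∑_{j∈S} Γ_j and Γ_j is the mean bias of the marginal contributions of player j. -/
open Finset MeasureTheory

/-- Noise of the marginal contribution of player `i`. -/
noncomputable def eps (N : Nat) {O : Type*} (nu : Finset (Fin N) -> O -> Real)
    (i : Fin N) (S : Finset (Fin N)) (om : O) : Real :=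
  nu (insert i S) om - nu S om

/-- Mean bias of the marginal contributions of player `i`. -/
noncomputable def Gamma (N : Nat) {O : Type*} [MeasurableSpace O] (mu : Measure O)
    (nu : Finset (Fin N) -> O -> Real) (i : Fin N) : Real :=
  Finset.sum (Finset.univ.erase i).powerset (fun S => w N S * (integral mu (eps N nu i S)))

/-- Uncertain Shapley value of player `i`. -/
noncomputable def PhiT (N : Nat) {O : Type*} [MeasurableSpace O] (mu : Measure O)
    (v : Finset (Fin N) -> Real) (nu : Finset (Fin N) -> O -> Real) (i : Fin N) : Real :=
  Finset.sum (Finset.univ.erase i).powerset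
    (fun S => w N S * (v (insert i S) - v S + integral mu (eps N nu i S)))

/-! The noise enters the uncertain Shapley value additively, as `Γ_i`. On the other hand, the additive
game `S ↦ ∑_{j ∈ S} Γ_j` has marginal contribution `Γ_i` for every coalition avoiding `i`, so its
Shapley value is `Γ_i` because the Shapley weights sum to one; linearity of `Φ_i` concludes. -/

open scoped Nat

lemma choose_pred_mul_factorial_mul_factorial_div_factorial {N k : ℕ} (hk : k < N) :
    ((N - 1).choose k : ℝ) * (k ! * (N - k - 1)! / N !) = 1 / N := by
  have hN : N ≠ 0 := by omega
  rw [Nat.cast_choose ℝ (by omega : k ≤ N - 1), Nat.sub_right_comm, ← Nat.mul_factorial_pred hN]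
  push_cast
  field_simp

lemma sum_w_powerset_erase {N : ℕ} (i : Fin N) : ∑ S ∈ (univ.erase i).powerset, w N S = 1 := by
  have hcard : #(univ.erase i) = N - 1 := by simp
  have hN : N - 1 + 1 = N := Nat.sub_add_cancel i.pos
  calc ∑ S ∈ (univ.erase i).powerset, w N S
      = ∑ k ∈ range N, ((N - 1).choose k : ℝ) * (k ! * (N - k - 1)! / N !) := by
        simp only [w, sum_powerset_apply_card (fun k => (k ! * (N - k - 1)! / N ! : ℝ)),
          hcard, hN, nsmul_eq_mul]
    _ = ∑ _k ∈ range N, 1 / (N : ℝ) :=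
        sum_congr rfl fun k hk => choose_pred_mul_factorial_mul_factorial_div_factorial
          (mem_range.mp hk)
    _ = 1 := by
        have : (N : ℝ) ≠ 0 := by exact_mod_cast i.pos.ne'
        simp [this]

lemma Phi_add {N : ℕ} (v u : Finset (Fin N) → ℝ) (i : Fin N) :
    Phi N (fun S => v S + u S) i = Phi N v i + Phi N u i := by
  simp only [Phi, ← sum_add_distrib, ← mul_add]
  exact sum_congr rfl fun S _ => by ring

lemma Phi_sum {N : ℕ} (c : Fin N → ℝ) (i : Fin N) :
    Phi N (fun S => ∑ j ∈ S, c j) i = c i := by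
  have hmarginal : ∀ S ∈ (univ.erase i).powerset, w N S * (∑ j ∈ insert i S, c j - ∑ j ∈ S, c j)
      = w N S * c i := fun S hS => by
    rw [sum_insert fun hi => by simpa using mem_powerset.mp hS hi, add_sub_cancel_right]
  rw [Phi, sum_congr rfl hmarginal, ← sum_mul, sum_w_powerset_erase, one_mul]

lemma PhiT_eq_Phi_add_Gamma {N : ℕ} {O : Type*} [MeasurableSpace O] (mu : Measure O)
    (v : Finset (Fin N) → ℝ) (nu : Finset (Fin N) → O → ℝ) (i : Fin N) :
    PhiT N mu v nu i = Phi N v i + Gamma N mu nu i := by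
  simp only [PhiT, Phi, Gamma, ← sum_add_distrib, mul_add]

theorem uncertain_shapley_eq_shifted_regular_general (N : Nat) {O : Type*} [MeasurableSpace O]
    (mu : Measure O)
    (v : Finset (Fin N) -> Real) (nu : Finset (Fin N) -> O -> Real)
    (i : Fin N) :
    PhiT N mu v nu i =
      Phi N (fun S => v S + Finset.sum S (fun j => Gamma N mu nu j)) i := by
  rw [PhiT_eq_Phi_add_Gamma, Phi_add, Phi_sum]

theorem uncertain_shapley_eq_shifted_regular (N : Nat) {O : Type*} [MeasurableSpace O]
    (mu : Measure O) [IsProbabilityMeasure mu]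
    (v : Finset (Fin N) -> Real) (nu : Finset (Fin N) -> O -> Real)
    (hInt : ∀ S : Finset (Fin N), Integrable (nu S) mu) (i : Fin N) :
    PhiT N mu v nu i =
      Phi N (fun S => v S + Finset.sum S (fun j => Gamma N mu nu j)) i :=
  uncertain_shapley_eq_shifted_regular_general N mu v nu i
end
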